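/- Let $V$ be an $n$-dimensional real vector space with basis $\theta_1,\ldots,\theta_n$ and dual basis $\xi_1,\ldots,\xi_n$ of $V^*$. On $\wedge V \otimes \wedge V^*$ define $L = \sum_k e_{\theta_k} \otimes i_{\theta_k}$, $F = \sum_k i_{\xi_k} \otimes e_{\xi_k}$, and $h = \sum_k (e_{\theta_k} \circ i_{\xi_k} \otimes \mathrm{id} - \mathrm{id} \otimes e_{\xi_k} \circ i_{\theta_k})$. Then $LF - FL = h$, $hL - Lh = 2L$, and $hF - Fh = -2F$. -/

import Mathlib

open CliffordAlgebra ExteriorAlgebra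

variable {n : ℕ} {V : Type*} [AddCommGroup V] [Module ℝ V]

/-- `L = ∑ e_{θₖ} ⊗ i_{θₖ}` on `⋀V ⊗ ⋀V*`. -/
noncomputable def Lext (θ : Module.Basis (Fin n) ℝ V) :
    Module.End ℝ (TensorProduct ℝ (ExteriorAlgebra ℝ V)
      (ExteriorAlgebra ℝ (Module.Dual ℝ V))) :=
  ∑ k : Fin n, TensorProduct.map
    (LinearMap.mulLeft ℝ (ExteriorAlgebra.ι ℝ (θ k)))
    (contractLeft (Q := (0 : QuadraticForm ℝ (Module.Dual ℝ V)))
      (Module.Dual.eval ℝ V (θ k)))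

/-- `F = ∑ i_{ξₖ} ⊗ e_{ξₖ}` on `⋀V ⊗ ⋀V*`. -/
noncomputable def Fext (θ : Module.Basis (Fin n) ℝ V) :
    Module.End ℝ (TensorProduct ℝ (ExteriorAlgebra ℝ V)
      (ExteriorAlgebra ℝ (Module.Dual ℝ V))) :=
  ∑ k : Fin n, TensorProduct.map
    (contractLeft (Q := (0 : QuadraticForm ℝ V)) (θ.coord k))
    (LinearMap.mulLeft ℝ (ExteriorAlgebra.ι ℝ (θ.coord k)))

/-- `h = ∑ (e_{θₖ} ∘ i_{ξₖ} ⊗ id - id ⊗ e_{ξₖ} ∘ i_{θₖ})` on `⋀V ⊗ ⋀V*`. -/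
noncomputable def hext (θ : Module.Basis (Fin n) ℝ V) :
    Module.End ℝ (TensorProduct ℝ (ExteriorAlgebra ℝ V)
      (ExteriorAlgebra ℝ (Module.Dual ℝ V))) :=
  ∑ k : Fin n,
    (TensorProduct.map
      (LinearMap.mulLeft ℝ (ExteriorAlgebra.ι ℝ (θ k)) ∘ₗ
        contractLeft (Q := (0 : QuadraticForm ℝ V)) (θ.coord k))
      LinearMap.id -
     TensorProduct.map LinearMap.id
      (LinearMap.mulLeft ℝ (ExteriorAlgebra.ι ℝ (θ.coord k)) ∘ₗ
        contractLeft (Q := (0 : QuadraticForm ℝ (Module.Dual ℝ V)))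
          (Module.Dual.eval ℝ V (θ k))))

/-!
Both `e_{θₖ}, i_{ξₖ}` on `⋀V` and `e_{ξₖ}, i_{θₖ}` on `⋀V*` satisfy the canonical anticommutation
relations `{i_j, e_k} = δ_{jk}`, `{e_j, e_k} = 0 = {i_j, i_k}`. For two such families in algebras
`A` and `B`, write `h = N ⊗ 1 - 1 ⊗ N'` in `A ⊗ B` with the number operators `N = ∑ e_k i_k`.
Since `[N, e_k] = e_k` and `[N, i_k] = -i_k`, the elements `L` and `F` are eigenvectors of `ad h`
with eigenvalues `2` and `-2`, while in `[L, F]` the off-diagonal terms cancel because they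
anticommute in both tensor factors. The relations are then transported to `⋀V ⊗ ⋀V*` by the
algebra map `End ⋀V ⊗ End ⋀V* → End (⋀V ⊗ ⋀V*)`.
-/

open TensorProduct

theorem Ring.sum_lie {ι A : Type*} [Ring A] (s : Finset ι) (f : ι → A) (z : A) :
    ⁅∑ i ∈ s, f i, z⁆ = ∑ i ∈ s, ⁅f i, z⁆ := by
  simp only [Ring.lie_def, Finset.sum_mul, Finset.mul_sum, Finset.sum_sub_distrib]

theorem Ring.lie_sum {ι A : Type*} [Ring A] (s : Finset ι) (f : ι → A) (z : A) :
    ⁅z, ∑ i ∈ s, f i⁆ = ∑ i ∈ s, ⁅z, f i⁆ := by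
  simp only [Ring.lie_def, Finset.sum_mul, Finset.mul_sum, Finset.sum_sub_distrib]

section CanonicalAnticommutation

variable {ι A : Type*} [Ring A]

theorem lie_mul_eq_mul_anticomm_sub (x y z : A) :
    ⁅x * y, z⁆ = x * (y * z + z * y) - (x * z + z * x) * y := by
  rw [Ring.lie_def]; noncomm_ring

def numberOp [Fintype ι] (a b : ι → A) : A := ∑ k, a k * b k

variable [DecidableEq ι]

structure IsCAR (a b : ι → A) : Prop where
  anticomm_annihilation_creation : ∀ j k, b j * a k + a k * b j = if j = k then 1 else 0
  anticomm_creation : ∀ j k, a j * a k + a k * a j = 0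
  anticomm_annihilation : ∀ j k, b j * b k + b k * b j = 0

variable [Fintype ι] {a b : ι → A}

theorem IsCAR.lie_numberOp_creation (h : IsCAR a b) (k : ι) : ⁅numberOp a b, a k⁆ = a k := by
  simp [numberOp, Ring.sum_lie, lie_mul_eq_mul_anticomm_sub, h.anticomm_annihilation_creation,
    h.anticomm_creation]

theorem IsCAR.lie_numberOp_annihilation (h : IsCAR a b) (k : ι) :
    ⁅numberOp a b, b k⁆ = -b k := by
  simp [numberOp, Ring.sum_lie, lie_mul_eq_mul_anticomm_sub, add_comm (a _ * b k),
    h.anticomm_annihilation_creation, h.anticomm_annihilation]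

end CanonicalAnticommutation

section ExteriorAlgebra

variable {ι R M : Type*} [DecidableEq ι] [CommRing R] [AddCommGroup M] [Module R M]

theorem isCAR_mulLeft_ι_contractLeft (v : ι → M) (d : ι → Module.Dual R M)
    (hdv : ∀ j k, d j (v k) = if j = k then 1 else 0) :
    IsCAR (fun k => LinearMap.mulLeft R (ExteriorAlgebra.ι R (v k)))
      (fun k => contractLeft (Q := (0 : QuadraticForm R M)) (d k)) where
  anticomm_annihilation_creation j k := by
    refine LinearMap.ext fun x => ?_
    simp only [LinearMap.add_apply, Module.End.mul_apply, LinearMap.mulLeft_apply,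
      contractLeft_ι_mul, sub_add_cancel, hdv, ite_smul, one_smul, zero_smul]
    split_ifs <;> rfl
  anticomm_creation j k := by
    refine LinearMap.ext fun x => ?_
    simp [← mul_assoc, ← add_mul, ι_add_mul_swap]
  anticomm_annihilation j k := by
    refine LinearMap.ext fun x => ?_
    simp only [LinearMap.add_apply, Module.End.mul_apply, contractLeft_comm _ (d k),
      neg_add_cancel, LinearMap.zero_apply]

end ExteriorAlgebra

section TensorProduct

variable {ι R A B : Type*} [CommRing R] [Ring A] [Algebra R A] [Ring B] [Algebra R B]

theorem lie_tmul_one_sub_one_tmul (x x' : A) (y y' : B) :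
    ⁅x ⊗ₜ[R] (1 : B) - (1 : A) ⊗ₜ[R] y, x' ⊗ₜ[R] y'⁆ = ⁅x, x'⁆ ⊗ₜ[R] y' - x' ⊗ₜ[R] ⁅y, y'⁆ := by
  simp only [Ring.lie_def, sub_mul, mul_sub, Algebra.TensorProduct.tmul_mul_tmul, one_mul,
    mul_one, sub_tmul, tmul_sub]
  abel

theorem lie_tmul_one_sub_one_tmul_sum_tmul [Fintype ι] (x : A) (y : B) (u : ι → A) (v : ι → B)
    (c d : ℤ) (hu : ∀ k, ⁅x, u k⁆ = c • u k) (hv : ∀ k, ⁅y, v k⁆ = d • v k) :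
    ⁅x ⊗ₜ[R] (1 : B) - (1 : A) ⊗ₜ[R] y, ∑ k, u k ⊗ₜ[R] v k⁆ = (c - d) • ∑ k, u k ⊗ₜ[R] v k := by
  simp only [Ring.lie_sum, lie_tmul_one_sub_one_tmul, hu, hv, Finset.smul_sum, smul_tmul',
    sub_smul, ← smul_tmul]

variable [DecidableEq ι] {a b : ι → A} {a' b' : ι → B}

theorem IsCAR.lie_tmul_tmul (h : IsCAR a b) (h' : IsCAR a' b') (j k : ι) :
    ⁅a j ⊗ₜ[R] b' j, b k ⊗ₜ[R] a' k⁆ =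
      if j = k then (a k * b k) ⊗ₜ[R] (1 : B) - (1 : A) ⊗ₜ[R] (a' k * b' k) else 0 := by
  have hb := h.anticomm_annihilation_creation k j
  have hb' := h'.anticomm_annihilation_creation j k
  rw [Ring.lie_def, Algebra.TensorProduct.tmul_mul_tmul, Algebra.TensorProduct.tmul_mul_tmul]
  split_ifs with hjk
  · subst hjk
    rw [if_pos rfl] at hb hb'
    rw [eq_sub_of_add_eq hb, eq_sub_of_add_eq' hb', sub_tmul, tmul_sub, tmul_sub]
    abel
  · rw [if_neg (Ne.symm hjk)] at hb
    rw [if_neg hjk] at hb'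
    rw [eq_neg_of_add_eq_zero_left hb, eq_neg_of_add_eq_zero_right hb', neg_tmul, tmul_neg,
      neg_neg, sub_self]

variable [Fintype ι]

theorem IsCAR.lie_sum_tmul_sum_tmul (h : IsCAR a b) (h' : IsCAR a' b') :
    ⁅∑ k, a k ⊗ₜ[R] b' k, ∑ k, b k ⊗ₜ[R] a' k⁆ =
      numberOp a b ⊗ₜ[R] (1 : B) - (1 : A) ⊗ₜ[R] numberOp a' b' := by
  simp [Ring.sum_lie, Ring.lie_sum, h.lie_tmul_tmul h', numberOp, sum_tmul, tmul_sum]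

theorem IsCAR.lie_numberOp_sub_sum_creation_tmul (h : IsCAR a b) (h' : IsCAR a' b') :
    ⁅numberOp a b ⊗ₜ[R] (1 : B) - (1 : A) ⊗ₜ[R] numberOp a' b', ∑ k, a k ⊗ₜ[R] b' k⁆ =
      2 • ∑ k, a k ⊗ₜ[R] b' k := by
  rw [lie_tmul_one_sub_one_tmul_sum_tmul _ _ _ _ 1 (-1) (by simpa using h.lie_numberOp_creation)
    (by simpa using h'.lie_numberOp_annihilation)]
  norm_num

theorem IsCAR.lie_numberOp_sub_sum_annihilation_tmul (h : IsCAR a b) (h' : IsCAR a' b') :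
    ⁅numberOp a b ⊗ₜ[R] (1 : B) - (1 : A) ⊗ₜ[R] numberOp a' b', ∑ k, b k ⊗ₜ[R] a' k⁆ =
      -(2 • ∑ k, b k ⊗ₜ[R] a' k) := by
  rw [lie_tmul_one_sub_one_tmul_sum_tmul _ _ _ _ (-1) 1
    (by simpa using h.lie_numberOp_annihilation) (by simpa using h'.lie_numberOp_creation)]
  norm_num

end TensorProduct

/-- The `sl₂`-relations `LF - FL = h`, `hL - Lh = 2L`, `hF - Fh = -2F` on `⋀V ⊗ ⋀V*`. -/
theorem stmt14 (θ : Module.Basis (Fin n) ℝ V) :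
    Lext θ ∘ₗ Fext θ - Fext θ ∘ₗ Lext θ = hext θ ∧
    hext θ ∘ₗ Lext θ - Lext θ ∘ₗ hext θ = 2 • Lext θ ∧
    hext θ ∘ₗ Fext θ - Fext θ ∘ₗ hext θ = -(2 • Fext θ) := by
  let a (k : Fin n) := LinearMap.mulLeft ℝ (ExteriorAlgebra.ι ℝ (θ k))
  let b (k : Fin n) := contractLeft (Q := (0 : QuadraticForm ℝ V)) (θ.coord k)
  let a' (k : Fin n) := LinearMap.mulLeft ℝ (ExteriorAlgebra.ι ℝ (θ.coord k))
  let b' (k : Fin n) :=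
    contractLeft (Q := (0 : QuadraticForm ℝ (Module.Dual ℝ V))) (Module.Dual.eval ℝ V (θ k))
  have hab : IsCAR a b := isCAR_mulLeft_ι_contractLeft θ θ.coord fun j k => by
    simp [Finsupp.single_apply, eq_comm]
  have hab' : IsCAR a' b' := isCAR_mulLeft_ι_contractLeft θ.coord _ fun j k => by
    simp [Finsupp.single_apply]
  let φ := Module.endTensorEndAlgHom (R := ℝ) (S := ℝ) (A := ℝ) (M := ExteriorAlgebra ℝ V)
    (N := ExteriorAlgebra ℝ (Module.Dual ℝ V))
  have hφ (x y) : φ ⁅x, y⁆ = φ x ∘ₗ φ y - φ y ∘ₗ φ x := by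
    rw [Ring.lie_def, map_sub, map_mul, map_mul]; rfl
  have hL : Lext θ = φ (∑ k, a k ⊗ₜ b' k) := by
    simp [Lext, map_sum, φ, Module.endTensorEndAlgHom_apply, a, b']; rfl
  have hF : Fext θ = φ (∑ k, b k ⊗ₜ a' k) := by
    simp [Fext, map_sum, φ, Module.endTensorEndAlgHom_apply, a', b]; rfl
  have hH : hext θ = φ (numberOp a b ⊗ₜ 1 - 1 ⊗ₜ numberOp a' b') := by
    simp [hext, numberOp, sum_tmul, tmul_sum, map_sum, φ, Module.endTensorEndAlgHom_apply]; rfl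
  rw [hL, hF, hH, ← hφ, ← hφ, ← hφ, hab.lie_sum_tmul_sum_tmul hab',
    hab.lie_numberOp_sub_sum_creation_tmul hab', hab.lie_numberOp_sub_sum_annihilation_tmul hab']
  exact ⟨rfl, map_nsmul φ 2 _, (map_neg φ _).trans (congrArg Neg.neg (map_nsmul φ 2 _))⟩
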